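/- arXiv:2602.18045 — 4 statements merged into one kernel-verified Lean document; each statement's English description precedes it below -/
import Mathlib

section
/- Let S_1, ..., S_n, S_{n+1} be exchangeable real-valued random variables whose values are almost surely pairwise distinct, let k be in {1,...,n}, and let tau = S_{(k)} be the k-th smallest value among S_1,...,S_n. Then P(S_{n+1} <= tau) = k/(n+1). -/
open MeasureTheory
open scoped ENNReal

open Finset

/-- The `k`-th smallest value (k-th order statistic, `k ∈ {1,...,n}`) of `s : Fin n → ℝ`. -/
noncomputable def orderStat (n : ℕ) (s : Fin n → ℝ) (k : ℕ) : ℝ :=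
  ((List.ofFn s).insertionSort (· ≤ ·)).getD (k - 1) 0

lemma lowerSet_card {n : ℕ} (S : Finset (Fin n))
    (hS : ∀ ⦃a b : Fin n⦄, a ≤ b → b ∈ S → a ∈ S) (j : Fin n) :
    j ∈ S ↔ (j : ℕ) < S.card := by
  constructor
  · intro hj
    have h1 : Finset.Iic j ⊆ S := fun a ha => hS (Finset.mem_Iic.mp ha) hj
    have := Finset.card_le_card h1
    rw [Fin.card_Iic] at this; omega
  · intro hj
    by_contra hjS
    have h2 : S ⊆ Finset.Iio j := by
      intro a ha
      rw [Finset.mem_Iio]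
      by_contra h
      exact hjS (hS (le_of_not_gt h) ha)
    have := Finset.card_le_card h2
    rw [Fin.card_Iio] at this; omega

lemma card_filter_ofFn {n : ℕ} (f : Fin n → ℝ) (p : ℝ → Prop) [DecidablePred p] :
    ((List.ofFn f).filter (fun a => decide (p a))).length
      = (Finset.univ.filter fun i => p (f i)).card := by
  rw [List.ofFn_eq_map, List.filter_map, List.length_map]
  simp only [Function.comp_def]
  simp [Finset.filter, Finset.card, Fin.univ_def, Multiset.filter_coe]

/-- key pointwise lemma for a strictly sorted list -/
lemma le_get_iff_card {l : List ℝ} (hs : l.Pairwise (· ≤ ·)) (hnd : l.Nodup)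
    (y : ℝ) (hy : ∀ a ∈ l, a ≠ y) (k : ℕ) (hk1 : 1 ≤ k) (hkl : k ≤ l.length) :
    y ≤ l.getD (k - 1) 0 ↔
      (Finset.univ.filter fun j : Fin l.length => l.get j ≤ y).card ≤ k - 1 := by
  have hlt : k - 1 < l.length := by omega
  set S : Finset (Fin l.length) := Finset.univ.filter fun j => l.get j ≤ y with hS
  have hlow : ∀ ⦃a b : Fin l.length⦄, a ≤ b → b ∈ S → a ∈ S := by
    intro a b hab hb
    simp only [hS, Finset.mem_filter, Finset.mem_univ, true_and] at *
    exact le_trans (by rcases hab.lt_or_eq with h | h; exact hs.rel_get_of_lt h; rw [h]) hb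
  have hmem : ∀ j : Fin l.length, (l.get j ≤ y ↔ (j : ℕ) < S.card) := by
    intro j
    rw [← lowerSet_card S hlow j]
    simp [hS]
  have hgetD : l.getD (k-1) 0 = l.get ⟨k-1, hlt⟩ := by
    rw [List.getD_eq_getElem _ _ hlt]; simp
  rw [hgetD]
  have hne : l.get ⟨k-1, hlt⟩ ≠ y := hy _ (l.get_mem _)
  constructor
  · intro h
    by_contra hc
    push_neg at hc
    have : (⟨k-1, hlt⟩ : Fin l.length) ∈ S := by
      rw [lowerSet_card S hlow]; simpa using hc
    simp only [hS, Finset.mem_filter] at this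
    have := this.2
    have : l.get ⟨k-1, hlt⟩ = y := le_antisymm this h
    exact hne this
  · intro h
    by_contra hc
    push_neg at hc
    have : l.get ⟨k-1, hlt⟩ ≤ y := le_of_lt hc
    rw [hmem] at this
    simp at this
    omega

/-- rank of `x i` among all the values -/
noncomputable def rnk {n : ℕ} (x : Fin n → ℝ) (i : Fin n) : ℕ :=
  (Finset.univ.filter fun j => x j ≤ x i).card

lemma le_orderStat_iff_rank_le {n : ℕ} (x : Fin (n+1) → ℝ) (hx : Function.Injective x)
    (k : ℕ) (hk1 : 1 ≤ k) (hkn : k ≤ n) :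
    x (Fin.last n) ≤ orderStat n (fun i => x i.castSucc) k ↔
      rnk x (Fin.last n) ≤ k := by
  set y := x (Fin.last n) with hy
  set f : Fin n → ℝ := fun i => x i.castSucc with hf
  set l := (List.ofFn f).insertionSort (· ≤ ·) with hl
  have hperm : l.Perm (List.ofFn f) := List.perm_insertionSort _ _
  have hlen : l.length = n := by rw [hperm.length_eq, List.length_ofFn]
  have hsort : l.Pairwise (· ≤ ·) := List.pairwise_insertionSort _ _
  have hymem : ∀ a ∈ l, a ≠ y := by
    intro a ha
    have : a ∈ List.ofFn f := hperm.mem_iff.mp ha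
    rw [List.mem_ofFn] at this
    obtain ⟨i, rfl⟩ := this
    intro h
    have := hx h
    exact absurd this (Fin.ne_of_lt (Fin.castSucc_lt_last i))
  have key := le_get_iff_card hsort (hperm.nodup_iff.mpr
      (List.nodup_ofFn.mpr (fun i j h => by
        have := hx h; exact Fin.castSucc_injective n this))) y hymem k hk1 (by omega)
  have hc1 : (Finset.univ.filter fun j : Fin l.length => l.get j ≤ y).card
      = (Finset.univ.filter fun i : Fin n => f i ≤ y).card := by
    rw [← card_filter_ofFn l.get (fun a => a ≤ y), ← card_filter_ofFn f (fun a => a ≤ y)]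
    rw [List.ofFn_get]
    exact (hperm.filter _).length_eq
  have hrnk : rnk x (Fin.last n) = (Finset.univ.filter fun i : Fin n => f i ≤ y).card + 1 := by
    unfold rnk
    rw [Fin.univ_castSuccEmb, Finset.filter_cons, if_pos (le_refl y)]
    rw [Finset.card_cons, Finset.filter_map, Finset.card_map]
    rfl
  rw [show orderStat n f k = l.getD (k-1) 0 from rfl, key, hc1, hrnk]
  omega

lemma one_le_rnk {n : ℕ} (x : Fin n → ℝ) (i : Fin n) : 1 ≤ rnk x i :=
  Finset.card_pos.mpr ⟨i, by simp [rnk]⟩ 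

lemma rnk_le_card {n : ℕ} (x : Fin n → ℝ) (i : Fin n) : rnk x i ≤ n :=
  le_trans (Finset.card_le_card (Finset.filter_subset _ _)) (by simp)

lemma rnk_injective {n : ℕ} {x : Fin n → ℝ} (hx : Function.Injective x) :
    Function.Injective (rnk x) := by
  have key : ∀ i j : Fin n, rnk x i = rnk x j → x i ≤ x j → i = j := by
    intro i j hij h
    have hsub : Finset.univ.filter (fun a => x a ≤ x i) ⊆
        Finset.univ.filter (fun a => x a ≤ x j) := by
      intro a ha
      simp only [Finset.mem_filter, Finset.mem_univ, true_and] at *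
      exact le_trans ha h
    have heq := Finset.eq_of_subset_of_card_le hsub (le_of_eq hij.symm)
    have hj : j ∈ Finset.univ.filter (fun a => x a ≤ x j) := by simp
    rw [← heq] at hj
    simp only [Finset.mem_filter, Finset.mem_univ, true_and] at hj
    exact hx (le_antisymm h hj)
  intro i j hij
  rcases le_total (x i) (x j) with h | h
  · exact key i j hij h
  · exact (key j i hij.symm h).symm

lemma rnk_exists_unique {n : ℕ} {x : Fin n → ℝ} (hx : Function.Injective x)
    (r : ℕ) (hr1 : 1 ≤ r) (hrn : r ≤ n) : ∃! i : Fin n, rnk x i = r := by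
  have hn : 0 < n := lt_of_lt_of_le hr1 hrn
  set e : Fin n → Fin n := fun i => ⟨rnk x i - 1, by
    have := rnk_le_card x i; have := one_le_rnk x i; omega⟩ with he
  have hei : Function.Injective e := by
    intro i j hij
    apply rnk_injective hx
    have h1 := one_le_rnk x i
    have h2 := one_le_rnk x j
    have : rnk x i - 1 = rnk x j - 1 := congrArg Fin.val hij
    omega
  have hes : Function.Surjective e := Finite.surjective_of_injective hei
  obtain ⟨i, hi⟩ := hes ⟨r - 1, by omega⟩
  have hir : rnk x i = r := by
    have h1 := one_le_rnk x i
    have : rnk x i - 1 = r - 1 := congrArg Fin.val hi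
    omega
  exact ⟨i, hir, fun j hj => rnk_injective hx (by rw [hj, hir])⟩

lemma card_filter_perm {α : Type*} [Fintype α] [DecidableEq α] (σ : Equiv.Perm α)
    (p : α → Prop) [DecidablePred p] :
    (Finset.univ.filter fun a => p (σ a)).card = (Finset.univ.filter p).card := by
  rw [← Finset.card_map σ.toEmbedding]
  congr 1
  ext a
  simp only [Finset.mem_map, Finset.mem_filter, Finset.mem_univ, true_and,
    Equiv.coe_toEmbedding]
  constructor
  · rintro ⟨b, hb, rfl⟩; exact hb
  · intro ha; exact ⟨σ.symm a, by simpa using ha, by simp⟩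

lemma measurable_rnk {n : ℕ} (i : Fin n) : Measurable (fun x : Fin n → ℝ => rnk x i) := by
  have : (fun x : Fin n → ℝ => rnk x i)
      = fun x => ∑ j : Fin n, if x j ≤ x i then 1 else 0 := by
    funext x
    rw [rnk, Finset.card_filter]
  rw [this]
  exact Finset.measurable_sum _ fun j _ =>
    Measurable.ite (measurableSet_le (measurable_pi_apply j) (measurable_pi_apply i))
      measurable_const measurable_const


/-- For exchangeable real-valued random variables `S 0, ..., S n` (`n+1` of them)
with almost surely pairwise distinct values, if `τ` is the `k`-th smallest among the first `n`
variables (`k ∈ {1,...,n}`), then `P(S (last) ≤ τ) = k / (n+1)`. -/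
theorem marginal_coverage_of_exchangeable {Ω : Type*} [MeasurableSpace Ω]
    (μ : Measure Ω) [IsProbabilityMeasure μ]
    (n : ℕ) (hn : 1 ≤ n) (S : Fin (n + 1) → Ω → ℝ) (hmeas : ∀ i, Measurable (S i))
    (hexch : ∀ σ : Equiv.Perm (Fin (n + 1)),
      Measure.map (fun ω => fun i => S (σ i) ω) μ = Measure.map (fun ω => fun i => S i ω) μ)
    (hdist : ∀ᵐ ω ∂μ, Function.Injective fun i => S i ω)
    (k : ℕ) (hk : k ∈ Finset.Icc 1 n) :
    μ {ω | S (Fin.last n) ω ≤ orderStat n (fun i => S i.castSucc ω) k}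
      = (k : ℝ≥0∞) / ((n : ℝ≥0∞) + 1) := by
  rw [Finset.mem_Icc] at hk
  obtain ⟨hk1, hkn⟩ := hk
  set f : Ω → (Fin (n+1) → ℝ) := fun ω i => S i ω with hf
  have hfm : Measurable f := measurable_pi_lambda _ hmeas
  set A : Fin (n+1) → ℕ → Set (Fin (n+1) → ℝ) := fun i r => {x | rnk x i = r} with hA
  have hAm : ∀ i r, MeasurableSet (A i r) := fun i r =>
    (measurable_rnk i) (measurableSet_singleton r)
  -- Step A: exchangeability
  have stepA : ∀ (i : Fin (n+1)) (r : ℕ), μ (f ⁻¹' A i r) = μ (f ⁻¹' A (Fin.last n) r) := by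
    intro i r
    set σ := Equiv.swap i (Fin.last n) with hσ
    have hg : Measurable (fun ω => fun j => S (σ j) ω) :=
      measurable_pi_lambda _ fun j => hmeas (σ j)
    have hmap := hexch σ
    have h1 : (fun ω => fun j => S (σ j) ω) ⁻¹' (A (Fin.last n) r) = f ⁻¹' (A i r) := by
      ext ω
      simp only [Set.mem_preimage, hA, Set.mem_setOf_eq, rnk, hf]
      have hσl : σ (Fin.last n) = i := Equiv.swap_apply_right _ _
      have hcard : (Finset.univ.filter fun j => S (σ j) ω ≤ S (σ (Fin.last n)) ω).card
          = (Finset.univ.filter fun j => S j ω ≤ S i ω).card := by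
        have h2 := card_filter_perm σ (fun j => S j ω ≤ S i ω)
        simpa [hσl] using h2
      rw [hcard]
    calc μ (f ⁻¹' A i r) = μ ((fun ω => fun j => S (σ j) ω) ⁻¹' (A (Fin.last n) r)) := by
          rw [h1]
      _ = (Measure.map (fun ω => fun j => S (σ j) ω) μ) (A (Fin.last n) r) := by
          rw [Measure.map_apply hg (hAm _ _)]
      _ = (Measure.map f μ) (A (Fin.last n) r) := by rw [hmap]
      _ = μ (f ⁻¹' A (Fin.last n) r) := Measure.map_apply hfm (hAm _ _)
  -- good set
  set G : Set Ω := {ω | Function.Injective fun i => S i ω} with hG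
  have hGm : MeasurableSet G := by
    have : G = ⋂ i, ⋂ j, {ω | S i ω = S j ω → i = j} := by
      ext ω; simp [hG, Function.Injective]
    rw [this]
    refine MeasurableSet.iInter fun i => MeasurableSet.iInter fun j => ?_
    by_cases hij : i = j
    · subst hij; simp
    · have : {ω | S i ω = S j ω → i = j} = {ω | S i ω = S j ω}ᶜ := by
        ext ω; simp [hij]
      rw [this]
      exact (measurableSet_eq_fun (hmeas i) (hmeas j)).compl
  have hGc : μ Gᶜ = 0 := by
    have := ae_iff.mp hdist
    simpa [hG, Set.compl_setOf] using this
  -- Step B: uniform rank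
  have stepB : ∀ r ∈ Finset.Icc 1 (n+1), μ (f ⁻¹' A (Fin.last n) r) = (↑(n+1) : ℝ≥0∞)⁻¹ := by
    intro r hr
    rw [Finset.mem_Icc] at hr
    have hcover : (⋃ i ∈ (Finset.univ : Finset (Fin (n+1))), (f ⁻¹' A i r ∩ G)) = G := by
      ext ω
      simp only [Set.mem_iUnion, Set.mem_inter_iff, Set.mem_preimage, Finset.mem_univ,
        exists_prop, true_and]
      constructor
      · rintro ⟨i, _, hω⟩; exact hω
      · intro hω
        obtain ⟨i, hi, -⟩ := rnk_exists_unique (x := f ω) hω r hr.1 hr.2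
        exact ⟨i, hi, hω⟩
    have hdisj : Set.PairwiseDisjoint (Finset.univ : Finset (Fin (n+1)))
        (fun i => f ⁻¹' A i r ∩ G) := by
      intro i _ j _ hij
      refine Set.disjoint_left.mpr fun ω hωi hωj => hij ?_
      exact rnk_injective (x := f ω) hωj.2 (hωi.1.trans hωj.1.symm)
    have hsum : ∑ i : Fin (n+1), μ (f ⁻¹' A i r ∩ G) = 1 := by
      rw [← measure_biUnion_finset hdisj
        (fun i _ => (hfm (hAm i r)).inter hGm), hcover]
      exact (prob_compl_eq_zero_iff hGm).mp hGc
    have hconst : ∀ i : Fin (n+1), μ (f ⁻¹' A i r ∩ G) = μ (f ⁻¹' A (Fin.last n) r) := by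
      intro i
      rw [measure_inter_conull hGc, stepA]
    rw [Finset.sum_congr rfl (fun i _ => hconst i)] at hsum
    rw [Finset.sum_const, Finset.card_univ, Fintype.card_fin, nsmul_eq_mul] at hsum
    have hne : ((n+1 : ℕ) : ℝ≥0∞) ≠ 0 := by simp
    have hnt : ((n+1 : ℕ) : ℝ≥0∞) ≠ ⊤ := by simp
    calc μ (f ⁻¹' A (Fin.last n) r)
        = (↑(n+1) : ℝ≥0∞)⁻¹ * (↑(n+1) * μ (f ⁻¹' A (Fin.last n) r)) := by
          rw [← mul_assoc, ENNReal.inv_mul_cancel hne hnt, one_mul]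
      _ = (↑(n+1) : ℝ≥0∞)⁻¹ := by rw [hsum, mul_one]
  -- final computation
  set T : Set Ω := {ω | S (Fin.last n) ω ≤ orderStat n (fun i => S i.castSucc ω) k} with hT
  set U : Set Ω := ⋃ r ∈ Finset.Icc 1 k, f ⁻¹' A (Fin.last n) r with hU
  have hTG : T ∩ G = U ∩ G := by
    ext ω
    simp only [hT, hU, Set.mem_inter_iff, Set.mem_setOf_eq, Set.mem_iUnion, Set.mem_preimage,
      exists_prop, Finset.mem_Icc]
    constructor
    · rintro ⟨hle, hinj⟩
      have hrk := (le_orderStat_iff_rank_le (f ω) hinj k hk1 hkn).mp hle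
      exact ⟨⟨rnk (f ω) (Fin.last n), ⟨one_le_rnk _ _, hrk⟩, rfl⟩, hinj⟩
    · rintro ⟨⟨r, hr, hrω⟩, hinj⟩
      refine ⟨(le_orderStat_iff_rank_le (f ω) hinj k hk1 hkn).mpr ?_, hinj⟩
      have : rnk (f ω) (Fin.last n) = r := hrω
      omega
  have hμT : μ T = μ U := by
    calc μ T = μ (T ∩ G) := (measure_inter_conull hGc).symm
      _ = μ (U ∩ G) := by rw [hTG]
      _ = μ U := measure_inter_conull hGc
  have hdisj2 : Set.PairwiseDisjoint (Finset.Icc 1 k : Finset ℕ)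
      (fun r => f ⁻¹' A (Fin.last n) r) := by
    intro r _ r' _ hrr'
    refine Set.disjoint_left.mpr fun ω hω hω' => hrr' ?_
    have h1 : rnk (f ω) (Fin.last n) = r := hω
    have h2 : rnk (f ω) (Fin.last n) = r' := hω'
    omega
  have hsum2 : μ U = ∑ r ∈ Finset.Icc 1 k, μ (f ⁻¹' A (Fin.last n) r) := by
    rw [hU]
    exact measure_biUnion_finset hdisj2 (fun r _ => hfm (hAm _ r))
  rw [hμT, hsum2, Finset.sum_congr rfl (fun r hr => stepB r (by
    rw [Finset.mem_Icc] at hr ⊢; omega))]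
  rw [Finset.sum_const, Nat.card_Icc, nsmul_eq_mul]
  have hkc : (k + 1 - 1 : ℕ) = k := by omega
  rw [hkc, ENNReal.div_eq_inv_mul]
  rw [Nat.cast_add, Nat.cast_one, mul_comm]
end

section
/- Let S_1, ..., S_n be i.i.d. real random variables with continuous cumulative distribution function F, let k be in {1,...,n}, and set u = n + 1 - k. Then the random variable p_cov := F(S_{(k)}), where S_{(k)} is the k-th smallest of S_1,...,S_n, satisfies, for every t in [0,1]: P(p_cov <= t) = (1/B(k,u)) * integral from 0 to t of x^{k-1} (1-x)^{u-1} dx, where B(k,u) is the Beta function. Equivalently, p_cov has the Beta(k, n+1-k) distribution. -/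
open MeasureTheory ProbabilityTheory
open scoped ENNReal

/-- The Beta function `B(a,b) = ∫_0^1 x^(a-1) (1-x)^(b-1) dx` for natural parameters. -/
noncomputable def betaFn (a b : ℕ) : ℝ :=
  ∫ x in (0 : ℝ)..1, x ^ (a - 1) * (1 - x) ^ (b - 1)

section Aux

open Finset Set Filter
open scoped Topology Classical

/-- Auxiliary: for a sorted list, the `k`-th entry satisfies a downward-closed predicate iff
at least `k` entries satisfy it. -/
lemma CBL.sorted_getD_iff_countP (l : List ℝ) (hl : l.Pairwise (· ≤ ·)) (p : ℝ → Bool)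
    (hp : ∀ x y : ℝ, x ≤ y → p y = true → p x = true)
    (k : ℕ) (hk1 : 1 ≤ k) (hk2 : k ≤ l.length) :
    (p (l.getD (k-1) 0) = true ↔ k ≤ l.countP p) := by
  have hlt : k - 1 < l.length := lt_of_lt_of_le (Nat.sub_lt hk1 one_pos) hk2
  have hgd : l.getD (k-1) 0 = l.get ⟨k-1, hlt⟩ := List.getD_eq_get l 0 ⟨k-1, hlt⟩
  rw [hgd]
  constructor
  · intro h
    have hsplit : l.countP p = (l.take k).countP p + (l.drop k).countP p := by
      conv_lhs => rw [← List.take_append_drop k l, List.countP_append]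
    have htake : (l.take k).countP p = k := by
      have hall : ∀ x ∈ l.take k, p x := by
        intro x hx
        obtain ⟨i, hi, rfl⟩ := List.mem_iff_getElem.mp hx
        rw [List.getElem_take]
        have hik : i < k := lt_of_lt_of_le hi (by simp [List.length_take])
        have : l.get ⟨i, by omega⟩ ≤ l.get ⟨k-1, hlt⟩ :=
          hl.rel_get_of_le (by simp [Fin.le_def]; omega)
        exact hp _ _ this h
      rw [List.countP_eq_length.mpr hall, List.length_take]
      omega
    omega
  · intro h
    by_contra hnp
    have hdrop : (l.drop (k-1)).countP p = 0 := by
      rw [List.countP_eq_zero]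
      intro x hx hpx
      obtain ⟨i, hi, rfl⟩ := List.mem_iff_getElem.mp hx
      rw [List.getElem_drop] at hpx
      have : l.get ⟨k-1, hlt⟩ ≤ l.get ⟨k-1+i, by simp [List.length_drop] at hi; omega⟩ :=
        hl.rel_get_of_le (by simp [Fin.le_def])
      exact hnp (hp _ _ this hpx)
    have hsplit : l.countP p = (l.take (k-1)).countP p + (l.drop (k-1)).countP p := by
      conv_lhs => rw [← List.take_append_drop (k-1) l, List.countP_append]
    have : (l.take (k-1)).countP p ≤ k - 1 := by
      calc (l.take (k-1)).countP p ≤ (l.take (k-1)).length := List.countP_le_length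
      _ ≤ k - 1 := by simp [List.length_take]
    omega

lemma CBL.countP_ofFn {n : ℕ} (s : Fin n → ℝ) (p : ℝ → Bool) :
    (List.ofFn s).countP p = (Finset.univ.filter (fun i => p (s i))).card := by
  rw [List.ofFn_eq_map, List.countP_map, List.countP_eq_length_filter]
  have : (Finset.univ : Finset (Fin n)) = ⟨↑(List.finRange n), (List.nodup_finRange n)⟩ := by
    rw [Fin.univ_def]
  rw [this, Finset.filter, Finset.card]
  simp only [Multiset.filter_coe, Multiset.coe_card]
  congr 1
  simp [Function.comp]
  rfl

lemma CBL.orderStat_le_iff {n : ℕ} (s : Fin n → ℝ) (F : ℝ → ℝ) (hmono : Monotone F)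
    (t : ℝ) (k : ℕ) (hk1 : 1 ≤ k) (hk2 : k ≤ n) :
    (F (orderStat n s k) ≤ t ↔ k ≤ (Finset.univ.filter (fun i => F (s i) ≤ t)).card) := by
  set l := (List.ofFn s).insertionSort (· ≤ ·) with hl
  have hsorted : l.Pairwise (· ≤ ·) := List.pairwise_insertionSort _ _
  have hperm : l.Perm (List.ofFn s) := List.perm_insertionSort _ _
  have hlen : l.length = n := by rw [hperm.length_eq, List.length_ofFn]
  have hcount : l.countP (fun x => decide (F x ≤ t)) = (List.ofFn s).countP _ :=
    hperm.countP_eq _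
  have key := CBL.sorted_getD_iff_countP l hsorted (fun x => decide (F x ≤ t))
    (fun x y hxy hy => by simp_all; exact le_trans (hmono hxy) hy) k hk1 (by omega)
  rw [hcount, CBL.countP_ofFn] at key
  simpa [orderStat] using key

/-- Auxiliary: the measure of a sublevel set of a continuous CDF. -/
lemma CBL.sublevel_measure (ν : Measure ℝ) [IsProbabilityMeasure ν]
    (F : ℝ → ℝ) (hFcont : Continuous F) (hF : ∀ x, F x = (ν (Set.Iic x)).toReal)
    {t : ℝ} (ht0 : 0 ≤ t) (ht1 : t ≤ 1) :
    ν {x | F x ≤ t} = ENNReal.ofReal t := by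
  have hFc : F = cdf ν := funext fun x => by rw [hF, cdf_eq_real]; rfl
  have hmono : Monotone F := hFc ▸ monotone_cdf ν
  have hbot : Tendsto F atBot (𝓝 0) := hFc ▸ tendsto_cdf_atBot ν
  have htop : Tendsto F atTop (𝓝 1) := hFc ▸ tendsto_cdf_atTop ν
  have hofReal : ∀ x, ENNReal.ofReal (F x) = ν (Set.Iic x) := fun x => hFc ▸ ofReal_cdf ν x
  have hclosed : IsClosed {x | F x ≤ t} := isClosed_le hFcont continuous_const
  set A := {x | F x ≤ t} with hA
  rcases A.eq_empty_or_nonempty with hemp | hne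
  · have h0 : t ≤ 0 := by
      refine ge_of_tendsto hbot (Eventually.of_forall fun x => ?_)
      exact le_of_lt (lt_of_not_ge fun hx =>
        (eq_empty_iff_forall_notMem.mp hemp x) hx)
    have : t = 0 := le_antisymm h0 ht0
    simp [hemp, this]
  · by_cases hbdd : BddAbove A
    · have hc : sSup A ∈ A := hclosed.csSup_mem hne hbdd
      have hAeq : A = Set.Iic (sSup A) := by
        ext x
        constructor
        · exact fun hx => le_csSup hbdd hx
        · exact fun hx => le_trans (hmono hx) hc
      have hFc_eq : F (sSup A) = t := by
        refine le_antisymm hc ?_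
        have : Tendsto F (𝓝[>] (sSup A)) (𝓝 (F (sSup A))) :=
          (hFcont.continuousAt).continuousWithinAt.tendsto
        refine ge_of_tendsto this (eventually_nhdsWithin_of_forall fun x hx => ?_)
        exact le_of_lt (lt_of_not_ge fun hmem =>
          absurd (le_csSup hbdd hmem) (not_le.mpr hx))
      rw [hAeq, ← hofReal, hFc_eq]
    · have hAuniv : A = Set.univ := by
        ext y
        simp only [Set.mem_univ, iff_true]
        obtain ⟨x, hx⟩ := hne
        obtain ⟨z, hz, hyz⟩ := not_bddAbove_iff.mp hbdd y
        exact le_trans (hmono hyz.le) hz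
      have h1 : (1:ℝ) ≤ t := by
        refine le_of_tendsto htop (Eventually.of_forall fun x => ?_)
        exact (hAuniv ▸ mem_univ x : x ∈ A)
      have : t = 1 := le_antisymm ht1 h1
      rw [hAuniv, this]
      simp

/-- Auxiliary: derivative of the binomial tail sum. -/
lemma CBL.hasDerivAt_G (n k : ℕ) (hk1 : 1 ≤ k) (hk2 : k ≤ n) (t : ℝ) :
    HasDerivAt (fun t : ℝ => ∑ j ∈ Finset.Icc k n, (n.choose j : ℝ) * (t^j * (1-t)^(n-j)))
      ((n.choose k : ℝ) * k * t^(k-1) * (1-t)^(n-k)) t := by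
  set a : ℕ → ℝ := fun j => (n.choose j : ℝ) * j * t^(j-1) * (1-t)^(n-j) with ha
  have key : ∀ j, HasDerivAt (fun t : ℝ => (n.choose j : ℝ) * (t^j * (1-t)^(n-j)))
      (a j - a (j+1)) t := by
    intro j
    have h1 : HasDerivAt (fun t : ℝ => t^j) (j * t^(j-1)) t := hasDerivAt_pow j t
    have hin : HasDerivAt (fun t : ℝ => 1 - t) (-1) t := by
      simpa using (hasDerivAt_id' t).const_sub (1:ℝ)
    have h2 : HasDerivAt (fun t : ℝ => (1-t)^(n-j))
        (((n-j : ℕ) : ℝ) * (1-t)^(n-j-1) * (-1)) t :=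
      (hasDerivAt_pow (n-j) (1-t)).comp t hin
    have h3 := (h1.fun_mul h2).const_mul ((n.choose j : ℝ))
    refine h3.congr_deriv (Eq.symm ?_)
    have hc : (n.choose (j+1) : ℝ) * ((j:ℝ)+1) = (n.choose j : ℝ) * ((n-j : ℕ) : ℝ) := by
      exact_mod_cast Nat.choose_succ_right_eq n j
    simp only [ha]
    have hnj : n - (j+1) = n - j - 1 := by omega
    rw [hnj]
    simp only [Nat.add_sub_cancel]
    push_cast
    linear_combination (-(t^j * (1-t)^(n-j-1))) * hc
  have hsum : HasDerivAt (fun t : ℝ => ∑ j ∈ Finset.Icc k n, (n.choose j : ℝ) * (t^j * (1-t)^(n-j)))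
      (∑ j ∈ Finset.Icc k n, (a j - a (j+1))) t := HasDerivAt.fun_sum (fun j _ => key j)
  have htel : ∑ j ∈ Finset.Icc k n, (a j - a (j+1)) = a k - a (n+1) := by
    rw [← Finset.Ico_add_one_right_eq_Icc, Finset.sum_Ico_eq_sum_range]
    have hrw : ∀ i, a (k + i) - a (k + i + 1) = (fun i => a (k+i)) i - (fun i => a (k+i)) (i+1) := by
      intro i; simp [Nat.add_assoc]
    simp_rw [hrw]
    rw [Finset.sum_range_sub' (fun i => a (k+i))]
    have h1 : k + (n + 1 - k) = n + 1 := by omega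
    simp [h1]
  have han1 : a (n+1) = 0 := by simp [ha, Nat.choose_succ_self]
  rw [htel, han1, sub_zero] at hsum
  convert hsum using 1

/-- Auxiliary: incomplete beta integral equals the binomial tail sum up to a constant. -/
lemma CBL.integral_eq_sum (n k : ℕ) (hk1 : 1 ≤ k) (hk2 : k ≤ n) (t : ℝ) :
    ∫ x in (0:ℝ)..t, x^(k-1)*(1-x)^(n-k)
      = ((n.choose k : ℝ) * k)⁻¹ * ∑ j ∈ Finset.Icc k n, (n.choose j : ℝ) * (t^j * (1-t)^(n-j)) := by
  set c : ℝ := ((n.choose k : ℝ) * k)⁻¹ with hc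
  have hcpos : (0:ℝ) < (n.choose k : ℝ) * k := by
    have := Nat.choose_pos hk2
    positivity
  have hfc : Continuous (fun x : ℝ => x^(k-1)*(1-x)^(n-k)) := by continuity
  set φ : ℝ → ℝ := fun t => (∫ x in (0:ℝ)..t, x^(k-1)*(1-x)^(n-k))
      - c * ∑ j ∈ Finset.Icc k n, (n.choose j : ℝ) * (t^j * (1-t)^(n-j)) with hφ
  have hderiv : ∀ x : ℝ, HasDerivAt φ 0 x := by
    intro x
    have hH : HasDerivAt (fun t : ℝ => ∫ x in (0:ℝ)..t, x^(k-1)*(1-x)^(n-k))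
        (x^(k-1)*(1-x)^(n-k)) x :=
      intervalIntegral.integral_hasDerivAt_right (hfc.intervalIntegrable _ _)
        (hfc.stronglyMeasurableAtFilter _ _) hfc.continuousAt
    have hG := (CBL.hasDerivAt_G n k hk1 hk2 x).const_mul c
    have := hH.fun_sub hG
    refine this.congr_deriv (Eq.symm ?_)
    have hcA : c * ((n.choose k : ℝ) * k) = 1 := by rw [hc]; exact inv_mul_cancel₀ hcpos.ne'
    linear_combination (x^(k-1)*(1-x)^(n-k)) * hcA
  have hconst : ∀ x : ℝ, φ x = φ 0 :=
    fun x => is_const_of_deriv_eq_zero (fun y => (hderiv y).differentiableAt)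
      (fun y => (hderiv y).deriv) x 0
  have hφ0 : φ 0 = 0 := by
    simp only [hφ, intervalIntegral.integral_same]
    have : ∑ j ∈ Finset.Icc k n, (n.choose j : ℝ) * ((0:ℝ)^j * (1-(0:ℝ))^(n-j)) = 0 := by
      apply Finset.sum_eq_zero
      intro j hj
      have : 1 ≤ j := le_trans hk1 (Finset.mem_Icc.mp hj).1
      simp [zero_pow (by omega : j ≠ 0)]
    rw [this]; ring
  have := hconst t
  rw [hφ0] at this
  simp only [hφ] at this
  linarith [this]

/-- Auxiliary: measure of the event that at least `k` of `n` i.i.d. variables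
land in a set of measure `t`. -/
lemma CBL.meas_count_ge {Ω : Type*} [MeasurableSpace Ω]
    (μ : Measure Ω) [IsProbabilityMeasure μ]
    (n : ℕ) (S : Fin n → Ω → ℝ) (hmeas : ∀ i, Measurable (S i))
    (ν : Measure ℝ) [IsProbabilityMeasure ν]
    (hindep : iIndepFun S μ)
    (hdist : ∀ i, Measure.map (S i) μ = ν)
    (A : Set ℝ) (hAm : MeasurableSet A)
    (t : ℝ) (ht0 : 0 ≤ t) (ht1 : t ≤ 1) (hνA : ν A = ENNReal.ofReal t)
    (k : ℕ) :
    μ {ω | k ≤ (Finset.univ.filter (fun i => S i ω ∈ A)).card}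
      = ENNReal.ofReal (∑ j ∈ Finset.Icc k n, (n.choose j : ℝ) * (t^j * (1-t)^(n-j))) := by
  have hνAc : ν Aᶜ = ENNReal.ofReal (1-t) := by
    rw [measure_compl hAm (measure_ne_top ν A), hνA, measure_univ]
    rw [show (1:ℝ≥0∞) = ENNReal.ofReal 1 by simp]
    rw [← ENNReal.ofReal_sub _ ht0]
  set D : Finset (Fin n) → Fin n → Set ℝ := fun B i => if i ∈ B then A else Aᶜ with hD
  have hDm : ∀ B i, MeasurableSet (D B i) := by
    intro B i; by_cases h : i ∈ B <;> simp [hD, h, hAm, hAm.compl]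
  set E : Finset (Fin n) → Set Ω := fun B => ⋂ i, S i ⁻¹' (D B i) with hE
  set PP : Finset (Finset (Fin n)) := univ.filter (fun B => k ≤ B.card) with hPP
  have hset : {ω | k ≤ (Finset.univ.filter (fun i => S i ω ∈ A)).card} = ⋃ B ∈ PP, E B := by
    ext ω
    simp only [Set.mem_setOf_eq, Set.mem_iUnion, hE, hPP, Finset.mem_filter, Finset.mem_univ,
      true_and, Set.mem_iInter, Set.mem_preimage]
    constructor
    · intro h
      refine ⟨univ.filter (fun i => S i ω ∈ A), h, fun i => ?_⟩
      by_cases hi : S i ω ∈ A <;> simp [hD, hi]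
    · rintro ⟨B, hBk, hB⟩
      have : univ.filter (fun i => S i ω ∈ A) = B := by
        ext i
        simp only [Finset.mem_filter, Finset.mem_univ, true_and]
        have := hB i
        by_cases hi : i ∈ B <;> simp [hD, hi] at this <;> simp [hi, this]
      rw [this]; exact hBk
  have hpiece : ∀ B : Finset (Fin n), μ (E B)
      = ENNReal.ofReal t ^ B.card * ENNReal.ofReal (1-t) ^ (n - B.card) := by
    intro B
    have := hindep.meas_iInter (s := fun i => S i ⁻¹' (D B i))
      (fun i => ⟨D B i, (hDm B i), rfl⟩)
    rw [hE, this]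
    have hall : ∀ i, μ (S i ⁻¹' (D B i)) = ν (D B i) := by
      intro i
      rw [← hdist i, Measure.map_apply (hmeas i) (hDm B i)]
    simp_rw [hall]
    rw [← Finset.prod_mul_prod_compl B]
    have h1 : ∀ i ∈ B, ν (D B i) = ENNReal.ofReal t := by
      intro i hi; simp [hD, hi, hνA]
    have h2 : ∀ i ∈ Bᶜ, ν (D B i) = ENNReal.ofReal (1-t) := by
      intro i hi; simp only [Finset.mem_compl] at hi; simp [hD, hi, hνAc]
    rw [Finset.prod_congr rfl h1, Finset.prod_congr rfl h2, Finset.prod_const,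
      Finset.prod_const, Finset.card_compl]
    simp [Fintype.card_fin]
  have hEm : ∀ B, MeasurableSet (E B) :=
    fun B => MeasurableSet.iInter (fun i => (hmeas i) (hDm B i))
  have hdisj : (↑PP : Set (Finset (Fin n))).PairwiseDisjoint E := by
    intro B hB B' hB' hne
    rw [Function.onFun, Set.disjoint_left]
    intro ω hω hω'
    apply hne
    have hBeq : ∀ (C : Finset (Fin n)), ω ∈ E C → univ.filter (fun i => S i ω ∈ A) = C := by
      intro C hC
      ext i
      simp only [Finset.mem_filter, Finset.mem_univ, true_and]
      have := Set.mem_iInter.mp hC i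
      by_cases hi : i ∈ C <;> simp [hD, hi] at this <;> simp [hi, this]
    rw [← hBeq B hω, ← hBeq B' hω']
  have hunion : μ (⋃ B ∈ PP, E B) = ∑ B ∈ PP, μ (E B) :=
    measure_biUnion_finset hdisj (fun B _ => hEm B)
  rw [hset, hunion]
  simp_rw [hpiece]
  have hPPeq : PP = (Finset.Icc k n).biUnion (fun j => Finset.powersetCard j univ) := by
    ext B
    simp only [hPP, Finset.mem_filter, Finset.mem_univ, true_and, Finset.mem_biUnion,
      Finset.mem_Icc, Finset.mem_powersetCard]
    constructor
    · intro h
      exact ⟨B.card, ⟨h, by simpa using Finset.card_le_univ B⟩, Finset.subset_univ B, rfl⟩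
    · rintro ⟨j, ⟨hj1, _⟩, _, rfl⟩
      exact hj1
  rw [hPPeq, Finset.sum_biUnion]
  · have hinner : ∀ j ∈ Finset.Icc k n, ∑ B ∈ Finset.powersetCard j (univ : Finset (Fin n)),
        ENNReal.ofReal t ^ B.card * ENNReal.ofReal (1-t) ^ (n - B.card)
        = (n.choose j : ℝ≥0∞) * (ENNReal.ofReal t ^ j * ENNReal.ofReal (1-t) ^ (n - j)) := by
      intro j hj
      rw [Finset.sum_congr rfl (fun B hB => by
        rw [(Finset.mem_powersetCard.mp hB).2])]
      rw [Finset.sum_const, Finset.card_powersetCard, Finset.card_univ, Fintype.card_fin]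
      simp [nsmul_eq_mul, mul_assoc]
    rw [Finset.sum_congr rfl hinner]
    rw [ENNReal.ofReal_sum_of_nonneg (fun j _ => mul_nonneg (Nat.cast_nonneg _)
      (mul_nonneg (pow_nonneg ht0 _) (pow_nonneg (by linarith) _)))]
    refine Finset.sum_congr rfl (fun j _ => ?_)
    rw [ENNReal.ofReal_mul (by positivity), ENNReal.ofReal_mul (by positivity),
      ENNReal.ofReal_pow ht0, ENNReal.ofReal_pow (by linarith), ENNReal.ofReal_natCast]
  · intro j hj j' hj' hne
    rw [Function.onFun]
    apply Finset.disjoint_left.mpr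
    intro B hB hB'
    exact hne (((Finset.mem_powersetCard.mp hB).2.symm.trans (Finset.mem_powersetCard.mp hB').2))

end Aux

/-- If `S 1, ..., S n` are i.i.d. real random variables with continuous CDF `F`,
`k ∈ {1,...,n}` and `u = n + 1 - k`, then the calibration-conditional coverage
`p_cov = F(S_(k))` satisfies `P(p_cov ≤ t) = (1/B(k,u)) ∫_0^t x^(k-1)(1-x)^(u-1) dx` for
every `t ∈ [0,1]`; i.e. `p_cov` has the Beta(k, n+1-k) distribution. -/
theorem coverage_beta_law {Ω : Type*} [MeasurableSpace Ω]
    (μ : Measure Ω) [IsProbabilityMeasure μ]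
    (n : ℕ) (hn : 1 ≤ n) (S : Fin n → Ω → ℝ) (hmeas : ∀ i, Measurable (S i))
    (ν : Measure ℝ) [IsProbabilityMeasure ν]
    (hindep : iIndepFun S μ)
    (hdist : ∀ i, Measure.map (S i) μ = ν)
    (F : ℝ → ℝ) (hFcont : Continuous F) (hF : ∀ x, F x = (ν (Set.Iic x)).toReal)
    (k u : ℕ) (hk : k ∈ Finset.Icc 1 n) (hu : u = n + 1 - k) :
    ∀ t ∈ Set.Icc (0 : ℝ) 1,
      μ {ω | F (orderStat n (fun i => S i ω) k) ≤ t}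
        = ENNReal.ofReal ((1 / betaFn k u) * ∫ x in (0 : ℝ)..t, x ^ (k - 1) * (1 - x) ^ (u - 1)) := by
  classical
  obtain ⟨hk1, hk2⟩ := Finset.mem_Icc.mp hk
  intro t ht
  obtain ⟨ht0, ht1⟩ := ht
  have hFc : F = ProbabilityTheory.cdf ν := funext fun x => by
    rw [hF, ProbabilityTheory.cdf_eq_real]; rfl
  have hmono : Monotone F := hFc ▸ ProbabilityTheory.monotone_cdf ν
  have hu1 : u - 1 = n - k := by omega
  -- the sublevel set
  have hAm : MeasurableSet {x | F x ≤ t} :=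
    (isClosed_le hFcont continuous_const).measurableSet
  have hνA : ν {x | F x ≤ t} = ENNReal.ofReal t :=
    CBL.sublevel_measure ν F hFcont hF ht0 ht1
  -- rewrite the event via the order statistic characterization
  have hcount := CBL.meas_count_ge μ n S hmeas ν hindep hdist
    {x | F x ≤ t} hAm t ht0 ht1 hνA k
  simp only [Set.mem_setOf_eq] at hcount
  have hsetEq : {ω | F (orderStat n (fun i => S i ω) k) ≤ t}
      = {ω | k ≤ (Finset.univ.filter (fun i => F (S i ω) ≤ t)).card} := by
    ext ω
    simp only [Set.mem_setOf_eq]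
    exact CBL.orderStat_le_iff (fun i => S i ω) F hmono t k hk1 hk2
  rw [hsetEq, hcount]
  congr 1
  -- the real-valued identity
  have hGt := CBL.integral_eq_sum n k hk1 hk2 t
  have hG1 := CBL.integral_eq_sum n k hk1 hk2 1
  have hG1val : ∑ j ∈ Finset.Icc k n, (n.choose j : ℝ) * ((1:ℝ)^j * (1-(1:ℝ))^(n-j)) = 1 := by
    rw [Finset.sum_eq_single_of_mem n (Finset.mem_Icc.mpr ⟨hk2, le_refl n⟩)]
    · simp
    · intro j hj hjn
      have h1 : j ≤ n := (Finset.mem_Icc.mp hj).2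
      have : n - j ≠ 0 := by omega
      simp [zero_pow this]
  have hbeta : betaFn k u = ((n.choose k : ℝ) * k)⁻¹ := by
    rw [betaFn, hu1, hG1, hG1val, mul_one]
  have hcne : ((n.choose k : ℝ) * k) ≠ 0 := by
    have := Nat.choose_pos hk2
    positivity
  rw [hu1, hGt, hbeta, one_div, inv_inv, ← mul_assoc, mul_inv_cancel₀ hcne, one_mul]
end

section
/- Let S_1, ..., S_n be i.i.d. real random variables with continuous CDF F, let alpha* in (0,1) and delta in (0,1), let u in {1,...,n}, and set k = n + 1 - u and tau = S_{(k)}. If the Beta(k,u) tail satisfies (1/B(k,u)) * integral from (1-alpha*) to 1 of x^{k-1}(1-x)^{u-1} dx >= 1 - delta, then the split conformal rule with threshold tau satisfies the PAC-style coverage guarantee: P( F(S_{(k)}) >= 1 - alpha* ) >= 1 - delta, where F(S_{(k)}) equals the calibration-conditional coverage probability P(S_{n+1} <= tau | S_1,...,S_n) for an independent future score S_{n+1} with CDF F. -/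
open MeasureTheory ProbabilityTheory
open scoped ENNReal

section L1
open Finset

lemma dstep (n j : ℕ) (hj : j < n) (x : ℝ) :
    HasDerivAt (fun t : ℝ => (n.choose j : ℝ) * t ^ j * (1 - t) ^ (n - j))
      ((j * n.choose j : ℕ) * x ^ (j - 1) * (1 - x) ^ (n - j)
        - ((j+1) * n.choose (j+1) : ℕ) * x ^ j * (1 - x) ^ (n - (j+1))) x := by
  have h1 : HasDerivAt (fun t : ℝ => t ^ j) ((j : ℝ) * x ^ (j - 1)) x := hasDerivAt_pow j x
  have hlin : HasDerivAt (fun t : ℝ => 1 - t) (-1 : ℝ) x := by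
    simpa using (hasDerivAt_id x).const_sub 1
  have h2 : HasDerivAt (fun t : ℝ => (1 - t) ^ (n - j))
      (((n - j : ℕ) : ℝ) * (1 - x) ^ (n - j - 1) * (-1)) x :=
    (hasDerivAt_pow (n - j) (1 - x)).comp x hlin
  have h3 := ((h1.mul h2).const_mul (n.choose j : ℝ))
  convert h3 using 1
  case e'_4 => rfl
  case e'_5 => rfl
  · ext y; rw [Pi.mul_apply]; ring
  have hc : ((n.choose (j+1) * (j+1) : ℕ) : ℝ) = ((n.choose j * (n - j) : ℕ) : ℝ) := by
    rw [Nat.choose_succ_right_eq]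
  push_cast [Nat.cast_sub hj.le] at hc ⊢
  rw [show n - (j+1) = n - j - 1 from by omega]
  linear_combination (-(x ^ j * (1 - x) ^ (n - j - 1))) * hc

lemma hasDerivAt_binomSum (n k : ℕ) (hkn : k ≤ n) (x : ℝ) :
    HasDerivAt (fun t : ℝ => ∑ j ∈ range k, (n.choose j : ℝ) * t ^ j * (1 - t) ^ (n - j))
      (-((k * n.choose k : ℕ) * x ^ (k - 1) * (1 - x) ^ (n - k))) x := by
  have h := HasDerivAt.sum (fun j hj =>
    dstep n j (lt_of_lt_of_le (mem_range.1 hj) hkn) x)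
  convert h using 1
  case e'_4 => rfl
  case e'_5 => rfl
  case e'_8 => funext y; rw [Finset.sum_apply]
  have hs := Finset.sum_range_sub' (fun j => ((j * n.choose j : ℕ) : ℝ) * x ^ (j - 1) * (1 - x) ^ (n - j)) k
  simp only [Nat.add_sub_cancel] at hs
  rw [hs]
  simp

lemma binomSum_one (n k : ℕ) (hkn : k ≤ n) :
    ∑ j ∈ range k, (n.choose j : ℝ) * (1:ℝ) ^ j * (1 - 1) ^ (n - j) = 0 := by
  refine Finset.sum_eq_zero fun j hj => ?_
  have : n - j ≠ 0 := by have := mem_range.1 hj; omega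
  simp [this]

lemma const_mul_eq_one (n k u : ℕ) (hk1 : 1 ≤ k) (hkn : k ≤ n) (hu : u = n + 1 - k) :
    ((k-1).factorial * (u-1).factorial / n.factorial : ℝ) * (k * n.choose k) = 1 := by
  have hu1 : u - 1 = n - k := by omega
  have h1 : n.choose k * k.factorial * (n-k).factorial = n.factorial :=
    Nat.choose_mul_factorial_mul_factorial hkn
  have h2 : k * (k-1).factorial = k.factorial := Nat.mul_factorial_pred (by omega)
  have hnf : (n.factorial : ℝ) ≠ 0 := Nat.cast_ne_zero.2 (Nat.factorial_ne_zero n)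
  rw [hu1]
  field_simp
  have h1' : ((n.choose k : ℝ)) * (k.factorial : ℝ) * ((n-k).factorial : ℝ) = (n.factorial : ℝ) := by
    exact_mod_cast congrArg (fun m : ℕ => (m : ℝ)) h1
  have h2' : (k : ℝ) * ((k-1).factorial : ℝ) = (k.factorial : ℝ) := by exact_mod_cast h2
  linear_combination ((n.choose k : ℝ) * ((n-k).factorial : ℝ)) * h2' + h1'

lemma integral_tail_eq (n k u : ℕ) (hk1 : 1 ≤ k) (hkn : k ≤ n) (hu : u = n + 1 - k) (t : ℝ) :
    ∫ x in t..(1:ℝ), x ^ (k-1) * (1-x) ^ (u-1)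
      = ((k-1).factorial * (u-1).factorial / n.factorial : ℝ)
        * ∑ j ∈ range k, (n.choose j : ℝ) * t ^ j * (1 - t) ^ (n - j) := by
  set c : ℝ := ((k-1).factorial * (u-1).factorial / n.factorial : ℝ) with hc
  have hu1 : u - 1 = n - k := by omega
  have key : ∀ x : ℝ, HasDerivAt
      (fun y : ℝ => -(c * ∑ j ∈ range k, (n.choose j : ℝ) * y ^ j * (1 - y) ^ (n - j)))
      (x ^ (k-1) * (1-x) ^ (u-1)) x := by
    intro x
    have h := ((hasDerivAt_binomSum n k hkn x).const_mul c).neg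
    convert h using 1
    case e'_4 => rfl
    case e'_5 => rfl
    case e'_8 => rfl
    rw [hu1]
    have := const_mul_eq_one n k u hk1 hkn hu
    rw [← hc] at this
    push_cast at this ⊢
    linear_combination (-(x ^ (k-1) * (1-x) ^ (n-k))) * this
  have hcont : Continuous fun x : ℝ => x ^ (k-1) * (1-x) ^ (u-1) := by continuity
  have := intervalIntegral.integral_eq_sub_of_hasDerivAt
    (fun x _ => key x) (hcont.intervalIntegrable t 1)
  rw [this]
  rw [binomSum_one n k hkn]
  ring

end L1
section L2
open MeasureTheory Set Filter Topology

lemma cdf_lt_measure (ν : Measure ℝ) [IsProbabilityMeasure ν]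
    (F : ℝ → ℝ) (hFcont : Continuous F) (hF : ∀ x, F x = (ν (Set.Iic x)).toReal)
    (t : ℝ) (ht0 : 0 < t) (ht1 : t < 1) :
    ν {x | F x < t} = ENNReal.ofReal t := by
  have hmono : Monotone F := fun x y hxy => by
    rw [hF, hF]
    exact ENNReal.toReal_mono (measure_ne_top ν _) (measure_mono (Iic_subset_Iic.2 hxy))
  -- lower limit: ∃ x, F x < t
  have hlow : ∃ x : ℝ, F x < t := by
    have hanti : Antitone fun m : ℕ => Iic (-(m:ℝ)) := fun a b hab =>
      Iic_subset_Iic.2 (neg_le_neg (Nat.cast_le.2 hab))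
    have hiInter : (⋂ m : ℕ, Iic (-(m:ℝ))) = (∅ : Set ℝ) := by
      ext x; simp only [mem_iInter, mem_Iic, mem_empty_iff_false, iff_false, not_forall]
      obtain ⟨m, hm⟩ := exists_nat_gt (-x)
      exact ⟨m, by push_cast; linarith⟩
    have := tendsto_measure_iInter_atTop (μ := ν) (fun m => nullMeasurableSet_Iic) hanti ⟨0, measure_ne_top _ _⟩
    rw [hiInter] at this
    simp only [measure_empty] at this
    have : ∀ᶠ m : ℕ in atTop, ν (Iic (-(m:ℝ))) < ENNReal.ofReal t :=
      this.eventually_lt_const (by simpa using ht0)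
    obtain ⟨m, hm⟩ := this.exists
    refine ⟨-(m:ℝ), ?_⟩
    rw [hF]
    have := (ENNReal.toReal_lt_toReal (measure_ne_top _ _) ENNReal.ofReal_ne_top).2 hm
    rwa [ENNReal.toReal_ofReal ht0.le] at this
  -- upper bound: ∃ x₀, t < F x₀, giving BddAbove
  have hhigh : ∃ x : ℝ, t < F x := by
    have hmonoS : Monotone fun m : ℕ => Iic ((m:ℝ)) := fun a b hab =>
      Iic_subset_Iic.2 (Nat.cast_le.2 hab)
    have hiUnion : (⋃ m : ℕ, Iic ((m:ℝ))) = (univ : Set ℝ) := by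
      ext x; simp only [mem_iUnion, mem_Iic, mem_univ, iff_true]
      obtain ⟨m, hm⟩ := exists_nat_gt x
      exact ⟨m, hm.le⟩
    have := tendsto_measure_iUnion_atTop (μ := ν) hmonoS
    rw [hiUnion] at this
    simp only [measure_univ] at this
    have hev : ∀ᶠ m : ℕ in atTop, ENNReal.ofReal t < ν (Iic ((m:ℝ))) :=
      this.eventually_const_lt (by simpa using ht1)
    obtain ⟨m, hm⟩ := hev.exists
    refine ⟨(m:ℝ), ?_⟩
    rw [hF]
    have := (ENNReal.toReal_lt_toReal ENNReal.ofReal_ne_top (measure_ne_top _ _)).2 hm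
    rwa [ENNReal.toReal_ofReal ht0.le] at this
  set A : Set ℝ := {x | F x < t} with hA
  have hAne : A.Nonempty := hlow
  have hAbdd : BddAbove A := by
    obtain ⟨x₀, hx₀⟩ := hhigh
    exact ⟨x₀, fun x hx => by
      by_contra hcon
      push_neg at hcon
      exact absurd (hmono hcon.le) (by simp only [hA, mem_setOf_eq] at hx; linarith)⟩
  set c : ℝ := sSup A with hc
  have hlt : ∀ x < c, F x < t := by
    intro x hx
    obtain ⟨y, hyA, hxy⟩ := exists_lt_of_lt_csSup hAne hx
    exact lt_of_le_of_lt (hmono hxy.le) hyA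
  have hge : ∀ x, c < x → t ≤ F x := by
    intro x hx
    by_contra hcon
    push_neg at hcon
    exact absurd (le_csSup hAbdd hcon) (not_le.2 hx)
  have hFc_le : F c ≤ t := by
    refine le_of_tendsto (hFcont.continuousAt.mono_left nhdsWithin_le_nhds :
      Tendsto F (nhdsWithin c (Iio c)) (nhds (F c))) ?_
    filter_upwards [self_mem_nhdsWithin] with x hx
    exact (hlt x hx).le
  have hFc_ge : t ≤ F c := by
    refine ge_of_tendsto (hFcont.continuousAt.mono_left nhdsWithin_le_nhds :
      Tendsto F (nhdsWithin c (Ioi c)) (nhds (F c))) ?_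
    filter_upwards [self_mem_nhdsWithin] with x hx
    exact hge x hx
  have hFc : F c = t := le_antisymm hFc_le hFc_ge
  have hAeq : A = Iio c := by
    ext x
    simp only [hA, mem_setOf_eq, mem_Iio]
    constructor
    · intro hx
      rcases lt_trichotomy x c with h | h | h
      · exact h
      · exact absurd hx (by rw [h, hFc]; exact lt_irrefl t)
      · exact absurd hx (not_lt.2 (hge x h))
    · exact hlt x
  -- ν (Iio c) = ofReal t via increasing union of Iic (c - 1/(m+1))
  have hIicOf : ∀ x : ℝ, ν (Iic x) = ENNReal.ofReal (F x) := by
    intro x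
    rw [hF, ENNReal.ofReal_toReal (measure_ne_top _ _)]
  have hmonoU : Monotone fun m : ℕ => Iic (c - 1/((m:ℝ)+1)) := by
    intro a b hab
    refine Iic_subset_Iic.2 (by
      have : 1/((b:ℝ)+1) ≤ 1/((a:ℝ)+1) := by
        apply one_div_le_one_div_of_le
        · positivity
        · exact_mod_cast add_le_add_left (Nat.cast_le.2 hab : (a:ℝ) ≤ b) 1
      linarith)
  have hiU : (⋃ m : ℕ, Iic (c - 1/((m:ℝ)+1))) = Iio c := by
    ext x
    simp only [mem_iUnion, mem_Iic, mem_Iio]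
    constructor
    · rintro ⟨m, hm⟩
      have : (0:ℝ) < 1/((m:ℝ)+1) := by positivity
      linarith
    · intro hx
      obtain ⟨m, hm⟩ := exists_nat_one_div_lt (show (0:ℝ) < c - x by linarith)
      exact ⟨m, by linarith⟩
  have htend := tendsto_measure_iUnion_atTop (μ := ν) hmonoU
  rw [hiU] at htend
  have htend2 : Tendsto (fun m : ℕ => ν (Iic (c - 1/((m:ℝ)+1)))) atTop
      (nhds (ENNReal.ofReal (F c))) := by
    have h1 : Tendsto (fun m : ℕ => c - 1/((m:ℝ)+1)) atTop (nhds c) := by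
      have := tendsto_one_div_add_atTop_nhds_zero_nat (𝕜 := ℝ)
      have := (tendsto_const_nhds (x := c) (f := atTop (α := ℕ))).sub this
      simpa using this
    have h2 : Tendsto (fun m : ℕ => F (c - 1/((m:ℝ)+1))) atTop (nhds (F c)) :=
      (hFcont.tendsto c).comp h1
    have h3 := (ENNReal.continuous_ofReal.tendsto (F c)).comp h2
    simpa [Function.comp_def, hIicOf] using h3
  have : ν (Iio c) = ENNReal.ofReal (F c) := tendsto_nhds_unique htend htend2
  rw [hAeq, this, hFc]


end L2
section L3


lemma count_le_orderStat (n k : ℕ) (hk1 : 1 ≤ k) (hkn : k ≤ n)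
    (F : ℝ → ℝ) (hmono : Monotone F) (t : ℝ) (s : Fin n → ℝ)
    (hcount : (Finset.univ.filter fun i => F (s i) < t).card ≤ k - 1) :
    t ≤ F (orderStat n s k) := by
  classical
  set l : List ℝ := (List.ofFn s).insertionSort (· ≤ ·) with hl
  have hlen : l.length = n := by
    rw [hl, List.length_insertionSort, List.length_ofFn]
  have hsorted : l.Pairwise (· ≤ ·) := List.pairwise_insertionSort _ _
  have hperm : l.Perm (List.ofFn s) := List.perm_insertionSort _ _
  set p : ℝ → Bool := fun x => decide (F x < t) with hp
  -- countP over the list equals the Finset count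
  have hcountP : l.countP p = (Finset.univ.filter fun i => F (s i) < t).card := by
    rw [hperm.countP_eq, List.ofFn_eq_map, List.countP_map]
    rw [Fin.univ_def]
    rw [List.countP_eq_length_filter]
    rfl
  by_contra hcon
  push_neg at hcon
  -- the first k entries of l all satisfy p
  have hkl : k - 1 < l.length := by omega
  have hgetD : orderStat n s k = l.get ⟨k - 1, hkl⟩ := by
    rw [orderStat, ← hl, List.getD_eq_getElem _ _ hkl]
    rfl
  rw [hgetD] at hcon
  have hfirst : ∀ m : Fin l.length, (m : ℕ) < k → p (l.get m) = true := by
    intro m hm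
    have hle : l.get m ≤ l.get ⟨k - 1, hkl⟩ := by
      rcases eq_or_lt_of_le (show (m : ℕ) ≤ k - 1 by omega) with h | h
      · have : m = ⟨k - 1, hkl⟩ := Fin.ext h
        rw [this]
      · exact List.Pairwise.rel_get_of_lt hsorted (by simpa [Fin.lt_def] using h)
    simp only [hp, decide_eq_true_eq]
    exact lt_of_le_of_lt (hmono hle) hcon
  -- hence countP ≥ k
  have htake : k ≤ l.countP p := by
    have h1 : l = l.take k ++ l.drop k := (List.take_append_drop k l).symm
    have h2 : (l.take k).countP p = (l.take k).length := by
      rw [List.countP_eq_length]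
      intro a ha
      rw [List.mem_take_iff_getElem] at ha
      obtain ⟨i, hi, rfl⟩ := ha
      rw [lt_min_iff] at hi
      exact hfirst ⟨i, hi.2⟩ (by simpa using hi.1)
    calc k = (l.take k).length := by rw [List.length_take]; omega
      _ = (l.take k).countP p := h2.symm
      _ ≤ l.countP p := by
          conv_rhs => rw [h1]
          rw [List.countP_append]
          omega
  omega

end L3
section L4
open MeasureTheory ProbabilityTheory Set

lemma binom_prob {Ω : Type*} [MeasurableSpace Ω] (μ : Measure Ω) [IsProbabilityMeasure μ]
    (n : ℕ) (S : Fin n → Ω → ℝ) (hmeas : ∀ i, Measurable (S i))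
    (ν : Measure ℝ) [IsProbabilityMeasure ν]
    (hindep : iIndepFun S μ)
    (hdist : ∀ i, Measure.map (S i) μ = ν)
    (P : ℝ → Prop) [DecidablePred P] (hA : MeasurableSet {x | P x}) (t : ℝ)
    (ht0 : 0 ≤ t) (ht1 : t ≤ 1)
    (hνA : ν {x | P x} = ENNReal.ofReal t) (m : ℕ) :
    ENNReal.ofReal (∑ j ∈ Finset.range (m+1), (n.choose j : ℝ) * t^j * (1-t)^(n-j))
      ≤ μ {ω | (Finset.univ.filter fun i => P (S i ω)).card ≤ m} := by
  classical
  set A : Set ℝ := {x | P x} with hAdef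
  have hPA : ∀ x, P x ↔ x ∈ A := fun x => Iff.rfl
  set B : Finset (Fin n) → Fin n → Set ℝ := fun T i => if i ∈ T then A else Aᶜ with hB
  set Cell : Finset (Fin n) → Set Ω := fun T => ⋂ i ∈ Finset.univ, (S i) ⁻¹' (B T i) with hCell
  have hBmeas : ∀ T i, MeasurableSet (B T i) := by
    intro T i
    by_cases h : i ∈ T <;> simp [hB, h, hA, hA.compl]
  have hCellMeas : ∀ T, MeasurableSet (Cell T) := fun T =>
    Finset.measurableSet_biInter _ fun i _ => (hmeas i) (hBmeas T i)
  have hmem : ∀ T (ω : Ω), ω ∈ Cell T ↔ ∀ i, (i ∈ T ↔ S i ω ∈ A) := by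
    intro T ω
    simp only [hCell, Set.mem_iInter, Set.mem_preimage, Finset.mem_univ, forall_true_left,
      true_implies]
    constructor
    · intro h i
      have := h i
      by_cases hiT : i ∈ T
      · simp [hB, hiT] at this; exact ⟨fun _ => this, fun _ => hiT⟩
      · simp [hB, hiT] at this; exact ⟨fun h' => absurd h' hiT, fun h' => absurd h' this⟩
    · intro h i
      by_cases hiT : i ∈ T
      · simp [hB, hiT]; exact (h i).1 hiT
      · simp [hB, hiT]; exact fun h' => hiT ((h i).2 h')
  have hCellμ : ∀ T : Finset (Fin n), μ (Cell T) =
      (ENNReal.ofReal t) ^ T.card * (ENNReal.ofReal (1-t)) ^ (n - T.card) := by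
    intro T
    have := hindep.measure_inter_preimage_eq_mul (S := Finset.univ) (sets := B T)
      (fun i _ => hBmeas T i)
    rw [hCell, this]
    have hfac : ∀ i, μ (S i ⁻¹' B T i)
        = if i ∈ T then ENNReal.ofReal t else ENNReal.ofReal (1-t) := by
      intro i
      have hmap : ∀ C : Set ℝ, MeasurableSet C → μ (S i ⁻¹' C) = ν C := by
        intro C hC
        rw [← hdist i, Measure.map_apply (hmeas i) hC]
      by_cases hiT : i ∈ T
      · simp only [hB, hiT, if_true, hmap A hA, hνA]
      · simp only [hB, hiT, if_false, hmap Aᶜ hA.compl]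
        rw [measure_compl hA (measure_ne_top _ _), hνA, measure_univ]
        rw [ENNReal.ofReal_sub 1 ht0, ENNReal.ofReal_one]
    calc ∏ i, μ (S i ⁻¹' B T i)
        = ∏ i, (if i ∈ T then ENNReal.ofReal t else ENNReal.ofReal (1-t)) :=
          Finset.prod_congr rfl fun i _ => hfac i
      _ = (∏ i ∈ T, (if i ∈ T then ENNReal.ofReal t else ENNReal.ofReal (1-t)))
          * ∏ i ∈ Tᶜ, (if i ∈ T then ENNReal.ofReal t else ENNReal.ofReal (1-t)) :=
          (Finset.prod_mul_prod_compl T _).symm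
      _ = (ENNReal.ofReal t) ^ T.card * (ENNReal.ofReal (1-t)) ^ (n - T.card) := by
          rw [Finset.prod_congr rfl (fun i hi => if_pos hi),
            Finset.prod_congr rfl (fun i hi => if_neg (Finset.mem_compl.1 hi)),
            Finset.prod_const, Finset.prod_const, Finset.card_compl, Fintype.card_fin]
  -- the collection of small subsets
  set 𝒯 : Finset (Finset (Fin n)) :=
    (Finset.range (m+1)).biUnion (fun j => Finset.powersetCard j Finset.univ) with h𝒯
  have hdisj : (𝒯 : Set (Finset (Fin n))).PairwiseDisjoint Cell := by
    intro T₁ _ T₂ _ hne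
    rw [Function.onFun, Set.disjoint_left]
    intro ω h1 h2
    rw [hmem] at h1 h2
    exact hne (Finset.ext fun i => (h1 i).trans ((h2 i).symm))
  have hunion : μ (⋃ T ∈ 𝒯, Cell T) = ∑ T ∈ 𝒯, μ (Cell T) :=
    measure_biUnion_finset hdisj fun T _ => hCellMeas T
  have hsub : (⋃ T ∈ 𝒯, Cell T) ⊆ {ω | (Finset.univ.filter fun i => P (S i ω)).card ≤ m} := by
    intro ω hω
    simp only [Set.mem_iUnion, exists_prop] at hω
    obtain ⟨T, hT𝒯, hωT⟩ := hω
    rw [hmem] at hωT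
    have hTcard : T.card ≤ m := by
      simp only [h𝒯, Finset.mem_biUnion, Finset.mem_range, Finset.mem_powersetCard] at hT𝒯
      obtain ⟨j, hj, _, hcard⟩ := hT𝒯
      omega
    have : (Finset.univ.filter fun i => P (S i ω)) = T := by
      ext i
      simp only [Finset.mem_filter, Finset.mem_univ, true_and]
      exact (hωT i).symm
    simpa [this] using hTcard
  -- compute the sum
  have hsum : ∑ T ∈ 𝒯, μ (Cell T)
      = ∑ j ∈ Finset.range (m+1), (n.choose j : ℕ)
          * ((ENNReal.ofReal t) ^ j * (ENNReal.ofReal (1-t)) ^ (n - j)) := by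
    rw [h𝒯, Finset.sum_biUnion]
    · refine Finset.sum_congr rfl fun j _ => ?_
      have : ∀ T ∈ Finset.powersetCard j (Finset.univ : Finset (Fin n)),
          μ (Cell T) = (ENNReal.ofReal t) ^ j * (ENNReal.ofReal (1-t)) ^ (n - j) := by
        intro T hT
        rw [hCellμ T, (Finset.mem_powersetCard.1 hT).2]
      rw [Finset.sum_congr rfl this, Finset.sum_const, Finset.card_powersetCard,
        Finset.card_univ, Fintype.card_fin, nsmul_eq_mul]
    · intro j₁ h₁ j₂ h₂ hne
      rw [Function.onFun, Finset.disjoint_left]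
      intro T hT₁ hT₂
      rw [Finset.mem_powersetCard] at hT₁ hT₂
      exact hne (hT₁.2 ▸ hT₂.2)
  -- convert ofReal sum
  have hofReal : ENNReal.ofReal (∑ j ∈ Finset.range (m+1), (n.choose j : ℝ) * t^j * (1-t)^(n-j))
      = ∑ j ∈ Finset.range (m+1), (n.choose j : ℕ)
          * ((ENNReal.ofReal t) ^ j * (ENNReal.ofReal (1-t)) ^ (n - j)) := by
    rw [ENNReal.ofReal_sum_of_nonneg]
    · refine Finset.sum_congr rfl fun j _ => ?_
      rw [ENNReal.ofReal_mul (by positivity), ENNReal.ofReal_mul (by positivity),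
        ENNReal.ofReal_pow ht0, ENNReal.ofReal_pow (by linarith), ENNReal.ofReal_natCast,
        mul_assoc]
    · intro j _
      have h1 : (0:ℝ) ≤ 1 - t := by linarith
      positivity
  rw [hofReal, ← hsum, ← hunion]
  exact measure_mono hsub

end L4

lemma binomSum_zero (n k : ℕ) (hk1 : 1 ≤ k) :
    ∑ j ∈ Finset.range k, (n.choose j : ℝ) * (0:ℝ) ^ j * (1 - 0) ^ (n - j) = 1 := by
  rw [Finset.sum_eq_single_of_mem 0 (Finset.mem_range.2 hk1)]
  · simp
  · intro j _ hj
    simp [zero_pow hj]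

lemma betaFn_eq (n k u : ℕ) (hk1 : 1 ≤ k) (hkn : k ≤ n) (hu : u = n + 1 - k) :
    betaFn k u = ((k-1).factorial * (u-1).factorial / n.factorial : ℝ) := by
  rw [betaFn, integral_tail_eq n k u hk1 hkn hu 0, binomSum_zero n k hk1, mul_one]

/-- SSBC admissibility: If `S 1, ..., S n` are i.i.d. with continuous CDF `F`,
`u ∈ {1,...,n}`, `k = n + 1 - u`, and the Beta(k,u) upper tail beyond `1 - α⋆` has mass at
least `1 - δ`, then the split conformal rule with threshold `τ = S_(k)` satisfies the
PAC-style coverage guarantee `P(F(S_(k)) ≥ 1 - α⋆) ≥ 1 - δ`. -/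
theorem ssbc_pac_coverage {Ω : Type*} [MeasurableSpace Ω]
    (μ : Measure Ω) [IsProbabilityMeasure μ]
    (n : ℕ) (hn : 1 ≤ n) (S : Fin n → Ω → ℝ) (hmeas : ∀ i, Measurable (S i))
    (ν : Measure ℝ) [IsProbabilityMeasure ν]
    (hindep : iIndepFun S μ)
    (hdist : ∀ i, Measure.map (S i) μ = ν)
    (F : ℝ → ℝ) (hFcont : Continuous F) (hF : ∀ x, F x = (ν (Set.Iic x)).toReal)
    (αstar δ : ℝ) (hα : αstar ∈ Set.Ioo (0 : ℝ) 1) (hδ : δ ∈ Set.Ioo (0 : ℝ) 1)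
    (u : ℕ) (hu : u ∈ Finset.Icc 1 n) (k : ℕ) (hk : k = n + 1 - u)
    (hBeta : 1 - δ ≤
      (1 / betaFn k u) * ∫ x in (1 - αstar)..(1 : ℝ), x ^ (k - 1) * (1 - x) ^ (u - 1)) :
    ENNReal.ofReal (1 - δ) ≤
      μ {ω | 1 - αstar ≤ F (orderStat n (fun i => S i ω) k)} := by
  classical
  obtain ⟨hu1, hun⟩ := Finset.mem_Icc.1 hu
  obtain ⟨hα0, hα1⟩ := hα
  have hk1 : 1 ≤ k := by omega
  have hkn : k ≤ n := by omega
  have hu' : u = n + 1 - k := by omega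
  set t : ℝ := 1 - αstar with hts
  have ht0 : 0 < t := by rw [hts]; linarith
  have ht1 : t < 1 := by rw [hts]; linarith
  have hmono : Monotone F := fun x y hxy => by
    rw [hF, hF]
    exact ENNReal.toReal_mono (measure_ne_top ν _)
      (measure_mono (Set.Iic_subset_Iic.2 hxy))
  have hνA : ν {x | F x < t} = ENNReal.ofReal t := cdf_lt_measure ν F hFcont hF t ht0 ht1
  have hAmeas : MeasurableSet {x | F x < t} := hFcont.measurable measurableSet_Iio
  have hbin := binom_prob μ n S hmeas ν hindep hdist (fun x => F x < t) hAmeas t ht0.le ht1.le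
    hνA (k-1)
  rw [show k - 1 + 1 = k by omega] at hbin
  -- the identity between the Beta tail and the binomial sum
  have hcne : ((k-1).factorial * (u-1).factorial / n.factorial : ℝ) ≠ 0 := by positivity
  have hid : (1 / betaFn k u) * ∫ x in t..(1:ℝ), x ^ (k-1) * (1-x) ^ (u-1)
      = ∑ j ∈ Finset.range k, (n.choose j : ℝ) * t^j * (1-t)^(n-j) := by
    rw [betaFn_eq n k u hk1 hkn hu', integral_tail_eq n k u hk1 hkn hu' t]
    field_simp
  have hSig : 1 - δ ≤ ∑ j ∈ Finset.range k, (n.choose j : ℝ) * t^j * (1-t)^(n-j) := by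
    rw [← hid]; exact hBeta
  calc ENNReal.ofReal (1 - δ)
      ≤ ENNReal.ofReal (∑ j ∈ Finset.range k, (n.choose j : ℝ) * t^j * (1-t)^(n-j)) :=
        ENNReal.ofReal_le_ofReal hSig
    _ ≤ μ {ω | (Finset.univ.filter fun i => F (S i ω) < t).card ≤ k - 1} := hbin
    _ ≤ μ {ω | 1 - αstar ≤ F (orderStat n (fun i => S i ω) k)} := by
        refine measure_mono fun ω hω => ?_
        exact count_le_orderStat n k hk1 hkn F hmono t (fun i => S i ω) hω
end

section
/- For each m, let X_m be a Beta-Binomial(m; a, b) random variable with fixed parameters a, b > 0, i.e., X_m is distributed as a Binomial(m, p) count where p is drawn from the Beta(a,b) distribution. Then for every t in (0,1), P(X_m / m >= t) converges, as m tends to infinity, to P(Z >= t), where Z has the Beta(a,b) distribution. -/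
open MeasureTheory
open scoped ENNReal

/-- The Beta function `B(a,b) = ∫_0^1 x^(a-1) (1-x)^(b-1) dx` for real parameters. -/
noncomputable def betaFnR (a b : ℝ) : ℝ :=
  ∫ x in (0 : ℝ)..1, x ^ (a - 1) * (1 - x) ^ (b - 1)

lemma bb_bern_sum (n : ℕ) (x : ℝ) :
    ∑ j ∈ Finset.range (n+1), (n.choose j : ℝ) * x^j * (1-x)^(n-j) = 1 := by
  have h := bernsteinPolynomial.sum ℝ n
  apply_fun (Polynomial.aeval x) at h
  simpa [bernsteinPolynomial, map_sum] using h

lemma bb_bern_var (n : ℕ) (x : ℝ) :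
    ∑ j ∈ Finset.range (n+1), ((n:ℝ)*x - j)^2 * ((n.choose j : ℝ) * x^j * (1-x)^(n-j))
      = n * (x*(1-x)) := by
  have h := bernsteinPolynomial.variance ℝ n
  apply_fun (Polynomial.aeval x) at h
  simpa [bernsteinPolynomial, map_sum, nsmul_eq_mul, mul_assoc] using h

lemma bb_integrable {p q : ℝ} (hp : 0 < p) (hq : 0 < q) :
    IntervalIntegrable (fun x : ℝ => x^(p-1)*(1-x)^(q-1)) volume 0 1 := by
  have h := Complex.betaIntegral_convergent (u := (p:ℂ)) (v := (q:ℂ)) (by simpa) (by simpa)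
  rw [intervalIntegrable_iff_integrableOn_Ioc_of_le zero_le_one] at h ⊢
  have h2 : IntegrableOn (fun x : ℝ => (((x:ℝ)^(p-1)*(1-x)^(q-1) : ℝ) : ℂ)) (Set.Ioc 0 1) := by
    apply h.congr_fun ?_ measurableSet_Ioc
    intro x hx
    have hx0 : (0:ℝ) ≤ x := le_of_lt hx.1
    have hx1 : (0:ℝ) ≤ 1 - x := by linarith [hx.2]
    simp only [Complex.ofReal_mul, Complex.ofReal_cpow hx0, Complex.ofReal_cpow hx1]
    push_cast
    ring_nf
  rw [IntegrableOn]
  simpa using h2.re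

/-- Chebyshev-type estimate for sums of Bernstein basis values over a far-away index set. -/
lemma bb_cheb {n : ℕ} (hn : 0 < n) {x c : ℝ} (hx0 : 0 ≤ x) (hx1 : x ≤ 1) (hc : 0 < c)
    {T : Finset ℕ} (hT : T ⊆ Finset.range (n+1))
    (hfar : ∀ j ∈ T, c^2 ≤ (x - (j:ℝ)/n)^2) :
    ∑ j ∈ T, (n.choose j : ℝ) * x^j * (1-x)^(n-j) ≤ x*(1-x)/(n * c^2) := by
  have hn' : (0:ℝ) < n := by exact_mod_cast hn
  have hbn : ∀ j, 0 ≤ (n.choose j : ℝ) * x^j * (1-x)^(n-j) := by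
    intro j
    have h1 : (0:ℝ) ≤ 1 - x := by linarith
    positivity
  have step1 : ∑ j ∈ T, (n.choose j:ℝ)*x^j*(1-x)^(n-j)
      ≤ ∑ j ∈ T, ((x - (j:ℝ)/n)^2/c^2) * ((n.choose j:ℝ)*x^j*(1-x)^(n-j)) := by
    refine Finset.sum_le_sum fun j hj => ?_
    refine le_mul_of_one_le_left (hbn j) ?_
    rw [le_div_iff₀ (by positivity), one_mul]
    exact hfar j hj
  have step2 : ∑ j ∈ T, ((x - (j:ℝ)/n)^2/c^2) * ((n.choose j:ℝ)*x^j*(1-x)^(n-j))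
      ≤ ∑ j ∈ Finset.range (n+1), ((x - (j:ℝ)/n)^2/c^2) * ((n.choose j:ℝ)*x^j*(1-x)^(n-j)) := by
    exact Finset.sum_le_sum_of_subset_of_nonneg hT fun j _ _ =>
      mul_nonneg (by positivity) (hbn j)
  have step3 : ∑ j ∈ Finset.range (n+1), ((x - (j:ℝ)/n)^2/c^2) * ((n.choose j:ℝ)*x^j*(1-x)^(n-j))
      = x*(1-x)/(n * c^2) := by
    have key : ∀ j : ℕ, ((x - (j:ℝ)/n)^2/c^2) * ((n.choose j:ℝ)*x^j*(1-x)^(n-j))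
        = (1/(n^2*c^2)) * (((n:ℝ)*x - j)^2 * ((n.choose j:ℝ)*x^j*(1-x)^(n-j))) := by
      intro j
      have hxj : x - (j:ℝ)/n = ((n:ℝ)*x - j)/n := by field_simp
      rw [hxj, div_pow]
      ring
    rw [Finset.sum_congr rfl fun j _ => key j, ← Finset.mul_sum, bb_bern_var]
    field_simp
  linarith

/-- Pointwise convergence of binomial tails to the step function. -/
lemma bb_tendsto {t x : ℝ} (hx0 : 0 < x) (hx1 : x < 1) (hxt : x ≠ t) :
    Filter.Tendsto (fun n : ℕ => ∑ j ∈ (Finset.range (n+1)).filter (fun j : ℕ => t ≤ (j:ℝ)/n),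
        (n.choose j : ℝ) * x^j * (1-x)^(n-j)) Filter.atTop
      (nhds (if t < x then 1 else 0)) := by
  set L : ℝ := if t < x then 1 else 0 with hL
  rw [← tendsto_sub_nhds_zero_iff]
  apply squeeze_zero_norm' (a := fun n : ℕ => (x*(1-x)/(x-t)^2) / n)
  · filter_upwards [Filter.eventually_ge_atTop 1] with n hn
    have hn' : (0:ℝ) < n := by exact_mod_cast hn
    have hxt2 : (0:ℝ) < (x-t)^2 := by
      have : x - t ≠ 0 := sub_ne_zero.mpr hxt
      positivity
    have hbn : ∀ j, 0 ≤ (n.choose j : ℝ) * x^j * (1-x)^(n-j) := by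
      intro j
      have h1 : (0:ℝ) ≤ 1 - x := by linarith
      positivity
    have hbound : x*(1-x)/(n * (x-t)^2) = (x*(1-x)/(x-t)^2) / n := by
      rw [div_div, mul_comm (n:ℝ) ((x-t)^2)]
    set S := (Finset.range (n+1)).filter (fun j : ℕ => t ≤ (j:ℝ)/n) with hS
    have hfnonneg : 0 ≤ ∑ j ∈ S, (n.choose j : ℝ) * x^j * (1-x)^(n-j) :=
      Finset.sum_nonneg fun j _ => hbn j
    rcases lt_or_gt_of_ne hxt with hlt | hgt
    · -- x < t : L = 0, tail sum is small
      have hL0 : L = 0 := by rw [hL, if_neg (by linarith)]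
      rw [hL0, sub_zero, Real.norm_eq_abs, abs_of_nonneg hfnonneg, ← hbound]
      refine le_trans (bb_cheb (c := t - x) (by exact_mod_cast hn) (le_of_lt hx0)
        (le_of_lt hx1) (by linarith) (Finset.filter_subset _ _) ?_) (le_of_eq (by ring))
      intro j hj
      rw [hS, Finset.mem_filter] at hj
      have := hj.2
      nlinarith
    · -- t < x : L = 1
      have hL1 : L = 1 := by rw [hL, if_pos hgt]
      have hsplit := Finset.sum_filter_add_sum_filter_not (Finset.range (n+1))
        (fun j : ℕ => t ≤ (j:ℝ)/n) (fun j => (n.choose j : ℝ) * x^j * (1-x)^(n-j))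
      rw [bb_bern_sum n x] at hsplit
      have hcompl : (1 : ℝ) - ∑ j ∈ S, (n.choose j : ℝ) * x^j * (1-x)^(n-j)
          = ∑ j ∈ (Finset.range (n+1)).filter (fun j : ℕ => ¬ t ≤ (j:ℝ)/n),
              (n.choose j : ℝ) * x^j * (1-x)^(n-j) := by
        linarith [hsplit]
      have hcb : ∑ j ∈ (Finset.range (n+1)).filter (fun j : ℕ => ¬ t ≤ (j:ℝ)/n),
          (n.choose j : ℝ) * x^j * (1-x)^(n-j) ≤ x*(1-x)/(n * (x-t)^2) := by
        refine bb_cheb (by exact_mod_cast hn) (le_of_lt hx0) (le_of_lt hx1)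
          (show (0:ℝ) < x - t by linarith) (Finset.filter_subset _ _) ?_
        intro j hj
        rw [Finset.mem_filter] at hj
        have := lt_of_not_ge hj.2
        nlinarith
      have hle1 : ∑ j ∈ S, (n.choose j : ℝ) * x^j * (1-x)^(n-j) ≤ 1 := by
        calc ∑ j ∈ S, (n.choose j : ℝ) * x^j * (1-x)^(n-j)
            ≤ ∑ j ∈ Finset.range (n+1), (n.choose j : ℝ) * x^j * (1-x)^(n-j) :=
              Finset.sum_le_sum_of_subset_of_nonneg (Finset.filter_subset _ _)
                (fun j _ _ => hbn j)
          _ = 1 := bb_bern_sum n x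
      rw [hL1, Real.norm_eq_abs, abs_sub_comm,
        abs_of_nonneg (by linarith), hcompl, ← hbound]
      exact hcb
  · exact tendsto_const_div_atTop_nhds_zero_nat _

/-- If, for each `m`, `X m` is a Beta-Binomial(m; a, b) random variable (with
fixed `a, b > 0`), i.e. `P(X m = j) = C(m,j) B(a+j, b+m-j) / B(a,b)`, then for every
`t ∈ (0,1)` the tail probability `P(X m / m ≥ t)` converges, as `m → ∞`, to the Beta(a,b)
tail `P(Z ≥ t) = (1/B(a,b)) ∫_t^1 x^(a-1)(1-x)^(b-1) dx`. -/
theorem betaBinomial_tail_tendsto_beta_tail {Ω : Type*} [MeasurableSpace Ω]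
    (μ : Measure Ω) [IsProbabilityMeasure μ]
    (a b : ℝ) (ha : 0 < a) (hb : 0 < b)
    (X : ℕ → Ω → ℕ) (hmeas : ∀ m, Measurable (X m))
    (hpmf : ∀ m j : ℕ, μ {ω | X m ω = j}
      = ENNReal.ofReal ((m.choose j : ℝ) * betaFnR (a + j) (b + m - j) / betaFnR a b))
    (t : ℝ) (ht : t ∈ Set.Ioo (0 : ℝ) 1) :
    Filter.Tendsto (fun m : ℕ => (μ {ω | t ≤ (X m ω : ℝ) / m}).toReal) Filter.atTop
      (nhds ((1 / betaFnR a b) * ∫ x in t..(1 : ℝ), x ^ (a - 1) * (1 - x) ^ (b - 1))) := by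
  obtain ⟨ht0, ht1⟩ := ht
  set g : ℝ → ℝ := fun x => x ^ (a-1) * (1-x) ^ (b-1) with hgdef
  have hgint : IntervalIntegrable g volume 0 1 := bb_integrable ha hb
  have hB : 0 < betaFnR a b := by
    apply intervalIntegral.intervalIntegral_pos_of_pos_on hgint ?_ zero_lt_one
    intro x hx
    have h1 : (0:ℝ) < x := hx.1
    have h2 : (0:ℝ) < 1 - x := by linarith [hx.2]
    positivity
  have hgI : IntegrableOn g (Set.Ioo 0 1) volume :=
    ((intervalIntegrable_iff_integrableOn_Ioc_of_le zero_le_one).1 hgint).mono_set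
      Set.Ioo_subset_Ioc_self
  have hgmeas : Measurable g := by fun_prop
  set S : ℕ → Finset ℕ := fun m => (Finset.range (m+1)).filter (fun j : ℕ => t ≤ (j:ℝ)/m)
    with hSdef
  -- integrability of each bernstein-times-g term
  have hbern_int : ∀ m j : ℕ, Integrable
      (fun x => ((m.choose j:ℝ) * x^j * (1-x)^(m-j)) * g x)
      (volume.restrict (Set.Ioo 0 1)) := by
    intro m j
    refine Integrable.bdd_mul (c := (m.choose j : ℝ)) hgI ?_ ?_
    · exact (Continuous.aestronglyMeasurable (by continuity))
    · rw [ae_restrict_iff' measurableSet_Ioo]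
      refine ae_of_all _ fun x hx => ?_
      have h0 : (0:ℝ) ≤ x := le_of_lt hx.1
      have h1 : (0:ℝ) ≤ 1 - x := by linarith [hx.2]
      have hp1 : x^j ≤ 1 := pow_le_one₀ h0 (le_of_lt hx.2)
      have hp2 : (1-x)^(m-j) ≤ 1 := pow_le_one₀ h1 (by linarith [hx.1])
      rw [Real.norm_eq_abs, abs_of_nonneg (by positivity)]
      calc (m.choose j:ℝ) * x^j * (1-x)^(m-j) ≤ (m.choose j:ℝ) * 1 * 1 := by
            apply mul_le_mul (mul_le_mul le_rfl hp1 (by positivity) (by positivity)) hp2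
              (by positivity) (by positivity)
        _ = (m.choose j:ℝ) := by ring
  -- key integral identity
  have hkey : ∀ m j : ℕ, j ≤ m → (m.choose j : ℝ) * betaFnR (a + j) (b + m - j)
      = ∫ x in Set.Ioo (0:ℝ) 1, ((m.choose j:ℝ) * x^j * (1-x)^(m-j)) * g x := by
    intro m j hj
    have hcong : Set.EqOn (fun x : ℝ => ((m.choose j:ℝ) * x^j * (1-x)^(m-j)) * g x)
        (fun x : ℝ => (m.choose j:ℝ) * (x ^ (a + (j:ℝ) - 1) * (1-x) ^ (b + (m:ℝ) - (j:ℝ) - 1)))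
        (Set.Ioo 0 1) := by
      intro x hx
      have hx0 : (0:ℝ) < x := hx.1
      have hx1 : (0:ℝ) < 1 - x := by linarith [hx.2]
      have e1 : x ^ (a + (j:ℝ) - 1) = x ^ (a-1) * x^j := by
        rw [show a + (j:ℝ) - 1 = (a-1) + (j:ℝ) by ring, Real.rpow_add hx0, Real.rpow_natCast]
      have e2 : (1-x) ^ (b + (m:ℝ) - (j:ℝ) - 1) = (1-x) ^ (b-1) * (1-x)^(m-j) := by
        rw [show b + (m:ℝ) - (j:ℝ) - 1 = (b-1) + ((m - j : ℕ):ℝ) by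
            rw [Nat.cast_sub hj]; ring,
          Real.rpow_add hx1, Real.rpow_natCast]
      simp only [hgdef]
      rw [e1, e2]; ring
    rw [setIntegral_congr_fun measurableSet_Ioo hcong, MeasureTheory.integral_const_mul]
    congr 1
    rw [betaFnR, intervalIntegral.integral_of_le zero_le_one,
      MeasureTheory.integral_Ioc_eq_integral_Ioo]
  -- beta values are nonnegative
  have hbeta_nn : ∀ m j : ℕ, j ≤ m → 0 ≤ betaFnR (a + j) (b + m - j) := by
    intro m j hj
    apply intervalIntegral.integral_nonneg zero_le_one
    intro u hu
    have h0 : (0:ℝ) ≤ u := hu.1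
    have h1 : (0:ℝ) ≤ 1 - u := by linarith [hu.2]
    positivity
  -- the tail probability as an integral, for m ≥ 1
  have hμeq : ∀ m : ℕ, 1 ≤ m → (μ {ω | t ≤ (X m ω : ℝ) / m}).toReal
      = (1/betaFnR a b) * ∫ x in Set.Ioo (0:ℝ) 1,
          (∑ j ∈ S m, (m.choose j:ℝ) * x^j * (1-x)^(m-j)) * g x := by
    intro m _
    have hsets : {ω | t ≤ (X m ω : ℝ)/m} = ⋃ j : ℕ, {ω | X m ω = j ∧ t ≤ (j:ℝ)/m} := by
      ext ω
      simp only [Set.mem_setOf_eq, Set.mem_iUnion]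
      constructor
      · intro h; exact ⟨X m ω, rfl, h⟩
      · rintro ⟨j, hj, h⟩; rw [hj]; exact h
    have hAm : ∀ j : ℕ, MeasurableSet {ω | X m ω = j ∧ t ≤ (j:ℝ)/m} := by
      intro j
      by_cases h : t ≤ (j:ℝ)/m
      · simp only [h, and_true]
        exact hmeas m (measurableSet_singleton j)
      · simp only [h, and_false, Set.setOf_false]
        exact MeasurableSet.empty
    have hdisj : Pairwise (Function.onFun Disjoint
        fun j : ℕ => {ω | X m ω = j ∧ t ≤ (j:ℝ)/m}) := by
      intro i j hij
      simp only [Function.onFun, Set.disjoint_left, Set.mem_setOf_eq]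
      rintro ω ⟨h1, -⟩ ⟨h2, -⟩
      exact hij (by rw [← h1, h2])
    rw [hsets, measure_iUnion hdisj hAm]
    have hterm : ∀ j : ℕ, μ {ω | X m ω = j ∧ t ≤ (j:ℝ)/m}
        = if t ≤ (j:ℝ)/m then
            ENNReal.ofReal ((m.choose j : ℝ) * betaFnR (a + j) (b + m - j) / betaFnR a b)
          else 0 := by
      intro j
      by_cases h : t ≤ (j:ℝ)/m
      · simp only [h, and_true, if_true]
        exact hpmf m j
      · simp only [h, and_false, if_false, Set.setOf_false, measure_empty]
    have hin : ∀ j ∈ S m, t ≤ (j:ℝ)/m := fun j hj => (Finset.mem_filter.1 hj).2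
    have hjle : ∀ j ∈ S m, j ≤ m := fun j hj =>
      Nat.lt_succ_iff.1 (Finset.mem_range.1 (Finset.mem_filter.1 hj).1)
    have hzero : ∀ j ∉ S m, (if t ≤ (j:ℝ)/m then
        ENNReal.ofReal ((m.choose j : ℝ) * betaFnR (a + j) (b + m - j) / betaFnR a b)
        else 0) = 0 := by
      intro j hj
      by_cases h : t ≤ (j:ℝ)/m
      · have hjm : m < j := by
          by_contra hle
          push_neg at hle
          apply hj
          simp only [hSdef, Finset.mem_filter, Finset.mem_range]
          exact ⟨Nat.lt_succ_of_le hle, h⟩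
        simp [h, Nat.choose_eq_zero_of_lt hjm]
      · simp [h]
    rw [tsum_congr hterm, tsum_eq_sum (s := S m) hzero]
    calc (∑ j ∈ S m, if t ≤ (j:ℝ)/m then
            ENNReal.ofReal ((m.choose j : ℝ) * betaFnR (a + j) (b + m - j) / betaFnR a b)
            else 0).toReal
        = (∑ j ∈ S m,
            ENNReal.ofReal ((m.choose j : ℝ) * betaFnR (a + j) (b + m - j) / betaFnR a b)).toReal := by
          congr 1
          exact Finset.sum_congr rfl fun j hj => if_pos (hin j hj)
      _ = ∑ j ∈ S m,
            (ENNReal.ofReal ((m.choose j : ℝ) * betaFnR (a + j) (b + m - j) / betaFnR a b)).toReal :=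
          ENNReal.toReal_sum fun j _ => ENNReal.ofReal_ne_top
      _ = ∑ j ∈ S m, (m.choose j : ℝ) * betaFnR (a + j) (b + m - j) / betaFnR a b :=
          Finset.sum_congr rfl fun j hj => ENNReal.toReal_ofReal
            (by have h1 := hbeta_nn m j (hjle j hj); positivity)
      _ = (1/betaFnR a b) * ∑ j ∈ S m, (m.choose j:ℝ) * betaFnR (a+j) (b+m-j) := by
          rw [Finset.mul_sum]
          exact Finset.sum_congr rfl fun j _ => by ring
      _ = (1/betaFnR a b) * ∑ j ∈ S m,
            ∫ x in Set.Ioo (0:ℝ) 1, ((m.choose j:ℝ)*x^j*(1-x)^(m-j)) * g x := by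
          congr 1
          exact Finset.sum_congr rfl fun j hj => hkey m j (hjle j hj)
      _ = (1/betaFnR a b) * ∫ x in Set.Ioo (0:ℝ) 1,
            (∑ j ∈ S m, (m.choose j:ℝ)*x^j*(1-x)^(m-j)) * g x := by
          rw [← integral_finset_sum _ (fun j _ => hbern_int m j)]
          congr 1
          refine integral_congr_ae (ae_of_all _ fun x => ?_)
          dsimp only
          rw [Finset.sum_mul]
  -- dominated convergence
  have hDCT : Filter.Tendsto (fun m : ℕ => ∫ x in Set.Ioo (0:ℝ) 1,
      (∑ j ∈ S m, (m.choose j:ℝ) * x^j * (1-x)^(m-j)) * g x) Filter.atTop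
      (nhds (∫ x in Set.Ioo (0:ℝ) 1, (Set.Ioi t).indicator g x)) := by
    apply tendsto_integral_of_dominated_convergence g
    · intro m
      refine ((Continuous.measurable (by continuity)).mul hgmeas).aestronglyMeasurable
    · exact hgI
    · intro m
      rw [ae_restrict_iff' measurableSet_Ioo]
      refine ae_of_all _ fun x hx => ?_
      have h0 : (0:ℝ) ≤ x := le_of_lt hx.1
      have h1 : (0:ℝ) ≤ 1 - x := by linarith [hx.2]
      have hbn : ∀ j, 0 ≤ (m.choose j : ℝ) * x^j * (1-x)^(m-j) := fun j => by positivity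
      have hf0 : 0 ≤ ∑ j ∈ S m, (m.choose j:ℝ) * x^j * (1-x)^(m-j) :=
        Finset.sum_nonneg fun j _ => hbn j
      have hf1 : ∑ j ∈ S m, (m.choose j:ℝ) * x^j * (1-x)^(m-j) ≤ 1 := by
        calc ∑ j ∈ S m, (m.choose j:ℝ) * x^j * (1-x)^(m-j)
            ≤ ∑ j ∈ Finset.range (m+1), (m.choose j:ℝ) * x^j * (1-x)^(m-j) :=
              Finset.sum_le_sum_of_subset_of_nonneg (Finset.filter_subset _ _)
                (fun j _ _ => hbn j)
          _ = 1 := bb_bern_sum m x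
      have hgx : 0 ≤ g x := by simp only [hgdef]; positivity
      rw [Real.norm_eq_abs, abs_of_nonneg (mul_nonneg hf0 hgx)]
      calc (∑ j ∈ S m, (m.choose j:ℝ) * x^j * (1-x)^(m-j)) * g x ≤ 1 * g x :=
            mul_le_mul_of_nonneg_right hf1 hgx
        _ = g x := one_mul _
    · have h1 : ∀ᵐ x ∂(volume.restrict (Set.Ioo (0:ℝ) 1)), x ≠ t := by
        refine ae_restrict_of_ae ?_
        have h2 : (volume : Measure ℝ) {x | ¬ x ≠ t} = 0 := by
          simp only [not_ne_iff, Set.setOf_eq_eq_singleton]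
          exact Real.volume_singleton
        exact ae_iff.2 h2
      filter_upwards [h1, ae_restrict_mem measurableSet_Ioo] with x hxt hx
      have hlimx := bb_tendsto hx.1 hx.2 hxt
      have h2 : (Set.Ioi t).indicator g x = (if t < x then 1 else 0) * g x := by
        by_cases h : t < x <;> simp [Set.indicator, h]
      rw [h2]
      exact hlimx.mul_const (g x)
  -- value of the limit integral
  have hlim : ∫ x in Set.Ioo (0:ℝ) 1, (Set.Ioi t).indicator g x
      = ∫ x in t..(1:ℝ), g x := by
    rw [MeasureTheory.setIntegral_indicator measurableSet_Ioi,
      show Set.Ioo (0:ℝ) 1 ∩ Set.Ioi t = Set.Ioo t 1 by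
        ext x
        simp only [Set.mem_inter_iff, Set.mem_Ioo, Set.mem_Ioi]
        constructor
        · rintro ⟨⟨-, h1⟩, h2⟩; exact ⟨h2, h1⟩
        · rintro ⟨h2, h1⟩; exact ⟨⟨lt_trans ht0 h2, h1⟩, h2⟩,
      intervalIntegral.integral_of_le (le_of_lt ht1),
      MeasureTheory.integral_Ioc_eq_integral_Ioo]
  have hfinal := hDCT.const_mul (1/betaFnR a b)
  rw [hlim] at hfinal
  refine Filter.Tendsto.congr' ?_ hfinal
  filter_upwards [Filter.eventually_ge_atTop 1] with m hm
  exact (hμeq m hm).symm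
end
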